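/- arXiv:1805.00533 — 2 statements merged into one kernel-verified Lean document; each statement's English description precedes it below -/
import Mathlib

section
/- For ρ ∈ (0,1), ∫₀^∞ t² e^{-t²/2} Φ(ρt/√(1-ρ²)) dt = √(π/2) − (1/√(2π))·(arctan(√(1-ρ²)/ρ) − ρ√(1-ρ²)). -/
open MeasureTheory Real Filter Set

noncomputable def Phi (x : ℝ) : ℝ :=
  ∫ s in Set.Iic x, (1 / Real.sqrt (2 * Real.pi)) * Real.exp (-s ^ 2 / 2)

noncomputable def stdPdf (x : ℝ) : ℝ := (1 / Real.sqrt (2 * Real.pi)) * Real.exp (-x ^ 2 / 2)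

noncomputable def phi2 (ρ x y : ℝ) : ℝ :=
  (1 / (2 * Real.pi * Real.sqrt (1 - ρ ^ 2))) *
    Real.exp (-(x ^ 2 - 2 * ρ * x * y + y ^ 2) / (2 * (1 - ρ ^ 2)))

noncomputable def sg (x : ℝ) : ℝ := if 0 ≤ x then 1 else -1

/-!
Write `F c = ∫₀^∞ t² e^{-t²/2} Φ(c t) dt`. Differentiating under the integral sign,
`F'(c) = (2π)^{-1/2} ∫₀^∞ t³ e^{-(1+c²)t²/2} dt = (2π)^{-1/2} · 2 / (1 + c²)²`, which is
`(2π)^{-1/2}` times the derivative of `arctan c + c / (1 + c²)`;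
and `F 0 = Φ 0 · √(2π)/2 = √(2π)/4`.
At `c = ρ/√(1-ρ²)` one has `arctan c = π/2 - arctan (√(1-ρ²)/ρ)` and `c / (1 + c²) = ρ √(1-ρ²)`.
-/

lemma neg_sq_div_two (t : ℝ) : -t ^ 2 / 2 = -(1 / 2) * t ^ 2 := by ring

lemma continuous_stdPdf : Continuous stdPdf := by
  unfold stdPdf; fun_prop

lemma stdPdf_nonneg (x : ℝ) : 0 ≤ stdPdf x := by
  unfold stdPdf; positivity

lemma stdPdf_le (x : ℝ) : stdPdf x ≤ 1 / √(2 * π) := by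
  unfold stdPdf
  refine mul_le_of_le_one_right (by positivity) (exp_le_one_iff.2 ?_)
  nlinarith [sq_nonneg x]

lemma stdPdf_neg (x : ℝ) : stdPdf (-x) = stdPdf x := by
  simp only [stdPdf, neg_sq]

lemma stdPdf_eq_mul_exp_neg_mul_sq (x : ℝ) : stdPdf x = 1 / √(2 * π) * exp (-(1 / 2) * x ^ 2) := by
  rw [stdPdf]; ring_nf

lemma integrable_stdPdf : Integrable stdPdf := by
  rw [funext stdPdf_eq_mul_exp_neg_mul_sq]
  exact (integrable_exp_neg_mul_sq one_half_pos).const_mul _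

lemma integral_stdPdf : ∫ x, stdPdf x = 1 := by
  simp_rw [stdPdf_eq_mul_exp_neg_mul_sq]
  rw [integral_const_mul, integral_gaussian, show π / (1 / 2) = 2 * π by ring,
    one_div_mul_cancel (by positivity)]

lemma Phi_eq_integral_stdPdf (x : ℝ) : Phi x = ∫ s in Iic x, stdPdf s := rfl

lemma hasDerivAt_Phi (x : ℝ) : HasDerivAt Phi (stdPdf x) x := by
  have h : Phi = fun x => Phi 0 + ∫ s in (0 : ℝ)..x, stdPdf s := by
    funext y
    rw [Phi_eq_integral_stdPdf, Phi_eq_integral_stdPdf,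
      ← intervalIntegral.integral_Iic_sub_Iic integrable_stdPdf.integrableOn
        integrable_stdPdf.integrableOn]
    ring
  rw [h]
  exact (intervalIntegral.integral_hasDerivAt_right integrable_stdPdf.intervalIntegrable
    (continuous_stdPdf.stronglyMeasurableAtFilter _ _) continuous_stdPdf.continuousAt).const_add _

lemma continuous_Phi : Continuous Phi :=
  continuous_iff_continuousAt.2 fun x => (hasDerivAt_Phi x).continuousAt

lemma Phi_nonneg (x : ℝ) : 0 ≤ Phi x :=
  integral_nonneg stdPdf_nonneg

lemma Phi_le_one (x : ℝ) : Phi x ≤ 1 := by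
  rw [Phi_eq_integral_stdPdf, ← integral_stdPdf]
  exact setIntegral_le_integral integrable_stdPdf (.of_forall stdPdf_nonneg)

lemma Phi_zero : Phi 0 = 1 / 2 := by
  have hsymm : ∫ s in Iic (0 : ℝ), stdPdf s = ∫ s in Ioi (0 : ℝ), stdPdf s := by
    simpa only [stdPdf_neg, neg_zero] using integral_comp_neg_Iic (0 : ℝ) stdPdf
  have hsplit : (∫ s in Iic (0 : ℝ), stdPdf s) + ∫ s in Ioi (0 : ℝ), stdPdf s = 1 := by
    rw [← setIntegral_union (Iic_disjoint_Ioi le_rfl) measurableSet_Ioi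
      integrable_stdPdf.integrableOn integrable_stdPdf.integrableOn, Iic_union_Ioi,
      setIntegral_univ, integral_stdPdf]
  rw [Phi_eq_integral_stdPdf]
  linarith

lemma integrableOn_Ioi_pow_mul_exp_neg_mul_sq (n : ℕ) {b : ℝ} (hb : 0 < b) :
    IntegrableOn (fun t : ℝ => t ^ n * exp (-b * t ^ 2)) (Ioi 0) := by
  simpa only [rpow_natCast] using
    integrableOn_rpow_mul_exp_neg_mul_sq hb (s := n) (by linarith [n.cast_nonneg (α := ℝ)])

lemma integral_Ioi_pow_mul_exp_neg_mul_sq (n : ℕ) {b : ℝ} (hb : 0 < b) :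
    ∫ t in Ioi (0 : ℝ), t ^ n * exp (-b * t ^ 2) =
      b ^ (-((n : ℝ) + 1) / 2) * (1 / 2) * Gamma ((n + 1) / 2) := by
  simpa only [rpow_natCast, rpow_two] using integral_rpow_mul_exp_neg_mul_rpow two_pos
    (by linarith [n.cast_nonneg (α := ℝ)] : -1 < (n : ℝ)) hb

lemma integral_Ioi_pow_three_mul_exp_neg_mul_sq {b : ℝ} (hb : 0 < b) :
    ∫ t in Ioi (0 : ℝ), t ^ 3 * exp (-b * t ^ 2) = 1 / (2 * b ^ 2) := by
  rw [integral_Ioi_pow_mul_exp_neg_mul_sq 3 hb]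
  norm_num [Gamma_two, rpow_neg hb.le]

lemma integral_Ioi_sq_mul_exp_neg_sq_div_two :
    ∫ t in Ioi (0 : ℝ), t ^ 2 * exp (-t ^ 2 / 2) = √(2 * π) / 2 := by
  have hpow : (1 / 2 : ℝ) ^ (-((2 : ℕ) + 1 : ℝ) / 2) = 2 * √2 := by
    rw [one_div, inv_rpow zero_le_two, ← rpow_neg zero_le_two,
      show -(-((2 : ℕ) + 1 : ℝ) / 2) = 1 + 1 / 2 by norm_num, rpow_add two_pos, rpow_one,
      sqrt_eq_rpow]
  have hGamma : Gamma (((2 : ℕ) + 1 : ℝ) / 2) = √π / 2 := by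
    rw [show ((2 : ℕ) + 1 : ℝ) / 2 = 1 / 2 + 1 by norm_num, Gamma_add_one (by norm_num),
      Gamma_one_half_eq]
    ring
  simp_rw [neg_sq_div_two]
  rw [integral_Ioi_pow_mul_exp_neg_mul_sq 2 one_half_pos, hpow, hGamma, sqrt_mul zero_le_two]
  ring

lemma hasDerivAt_integral_mul_Phi_comp_mul {μ : Measure ℝ} {w : ℝ → ℝ} (hw : Integrable w μ)
    (htw : Integrable (fun t => t * w t) μ) (c : ℝ) :
    HasDerivAt (fun c => ∫ t, w t * Phi (c * t) ∂μ) (∫ t, w t * (t * stdPdf (c * t)) ∂μ) c := by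
  have hmeas (c : ℝ) : AEStronglyMeasurable (fun t => w t * Phi (c * t)) μ :=
    hw.aestronglyMeasurable.mul (continuous_Phi.comp (continuous_const_mul c)).aestronglyMeasurable
  have hint : Integrable (fun t => w t * Phi (c * t)) μ := by
    refine hw.mono (hmeas c) (.of_forall fun t => ?_)
    rw [norm_mul, Real.norm_of_nonneg (Phi_nonneg _)]
    exact mul_le_of_le_one_right (norm_nonneg _) (Phi_le_one _)
  refine (hasDerivAt_integral_of_dominated_loc_of_deriv_le
    (F' := fun x t => w t * (t * stdPdf (x * t))) (Metric.ball_mem_nhds c one_pos)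
    (.of_forall hmeas) hint ?_ ?_ (htw.norm.mul_const (1 / √(2 * π))) ?_).2
  · exact hw.aestronglyMeasurable.mul (continuous_id.mul
      (continuous_stdPdf.comp (continuous_const_mul c))).aestronglyMeasurable
  · refine .of_forall fun t x _ => ?_
    rw [← mul_assoc, mul_comm (w t), norm_mul, Real.norm_of_nonneg (stdPdf_nonneg _)]
    exact mul_le_mul_of_nonneg_left (stdPdf_le _) (norm_nonneg _)
  · refine .of_forall fun t x _ => ?_
    have hPhi : HasDerivAt (fun x => Phi (x * t)) (stdPdf (x * t) * t) x :=
      HasDerivAt.comp (h := fun x => x * t) x (hasDerivAt_Phi (x * t)) (hasDerivAt_mul_const t)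
    rw [mul_comm t]
    exact hPhi.const_mul (w t)

lemma hasDerivAt_arctan_add_div_one_add_sq (c : ℝ) :
    HasDerivAt (fun c => arctan c + c / (1 + c ^ 2)) (2 / (1 + c ^ 2) ^ 2) c := by
  have h0 : 1 + c ^ 2 ≠ 0 := by positivity
  have hdiv := (hasDerivAt_id' c).fun_div ((hasDerivAt_pow 2 c).const_add 1) h0
  refine ((hasDerivAt_arctan c).fun_add hdiv).congr_deriv ?_
  field_simp
  ring

noncomputable def phiMoment (c : ℝ) : ℝ :=
  ∫ t in Ioi (0 : ℝ), t ^ 2 * exp (-t ^ 2 / 2) * Phi (c * t)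

lemma hasDerivAt_phiMoment (c : ℝ) :
    HasDerivAt phiMoment (2 / (1 + c ^ 2) ^ 2 / √(2 * π)) c := by
  have hw : IntegrableOn (fun t : ℝ => t ^ 2 * exp (-t ^ 2 / 2)) (Ioi 0) := by
    simpa only [← neg_sq_div_two] using integrableOn_Ioi_pow_mul_exp_neg_mul_sq 2 one_half_pos
  have htw : IntegrableOn (fun t : ℝ => t * (t ^ 2 * exp (-t ^ 2 / 2))) (Ioi 0) :=
    (integrableOn_Ioi_pow_mul_exp_neg_mul_sq 3 one_half_pos).congr_fun
      (fun t _ => by rw [neg_sq_div_two]; ring) measurableSet_Ioi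
  have hintegrand (t : ℝ) : t ^ 2 * exp (-t ^ 2 / 2) * (t * stdPdf (c * t)) =
      1 / √(2 * π) * (t ^ 3 * exp (-((1 + c ^ 2) / 2) * t ^ 2)) := by
    rw [stdPdf, show -((1 + c ^ 2) / 2) * t ^ 2 = -t ^ 2 / 2 + -(c * t) ^ 2 / 2 by ring, exp_add]
    ring
  have hvalue : ∫ t in Ioi (0 : ℝ), t ^ 2 * exp (-t ^ 2 / 2) * (t * stdPdf (c * t)) =
      2 / (1 + c ^ 2) ^ 2 / √(2 * π) := by
    simp_rw [hintegrand]
    rw [integral_const_mul, integral_Ioi_pow_three_mul_exp_neg_mul_sq (by positivity)]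
    field_simp
  exact hvalue ▸ hasDerivAt_integral_mul_Phi_comp_mul hw htw c

lemma phiMoment_zero : phiMoment 0 = √(2 * π) / 4 := by
  simp only [phiMoment, zero_mul, Phi_zero]
  rw [integral_mul_const, integral_Ioi_sq_mul_exp_neg_sq_div_two]
  ring

lemma phiMoment_eq (c : ℝ) :
    phiMoment c = √(2 * π) / 4 + (arctan c + c / (1 + c ^ 2)) / √(2 * π) := by
  have hderiv (c : ℝ) :
      HasDerivAt (fun c => phiMoment c - (arctan c + c / (1 + c ^ 2)) / √(2 * π)) 0 c := by
    simpa only [sub_self] using (hasDerivAt_phiMoment c).fun_sub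
      ((hasDerivAt_arctan_add_div_one_add_sq c).div_const √(2 * π))
  have := is_const_of_deriv_eq_zero (fun c => (hderiv c).differentiableAt)
    (fun c => (hderiv c).deriv) c 0
  simp only [arctan_zero, zero_div, add_zero, sub_zero, phiMoment_zero] at this
  linarith

theorem stmt2 (ρ : ℝ) (h1 : 0 < ρ) (h2 : ρ < 1) :
    ∫ t in Set.Ioi (0 : ℝ), t ^ 2 * Real.exp (-t ^ 2 / 2) * Phi (ρ * t / Real.sqrt (1 - ρ ^ 2))
      = Real.sqrt (Real.pi / 2) -
        (1 / Real.sqrt (2 * Real.pi)) *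
          (Real.arctan (Real.sqrt (1 - ρ ^ 2) / ρ) - ρ * Real.sqrt (1 - ρ ^ 2)) := by
  set s := √(1 - ρ ^ 2)
  have hs2 : s ^ 2 = 1 - ρ ^ 2 := sq_sqrt (by nlinarith)
  have hs : 0 < s := sqrt_pos.2 (by nlinarith)
  have hmoment :
      ∫ t in Ioi (0 : ℝ), t ^ 2 * exp (-t ^ 2 / 2) * Phi (ρ * t / s) = phiMoment (ρ / s) := by
    simp only [phiMoment, div_mul_eq_mul_div]
  have harctan : arctan (ρ / s) = π / 2 - arctan (s / ρ) := by
    rw [← inv_div, arctan_inv_of_pos (div_pos hs h1)]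
  have hrational : ρ / s / (1 + (ρ / s) ^ 2) = ρ * s := by
    field_simp
    nlinarith
  have hk : √(2 * π) ^ 2 = 2 * π := sq_sqrt (by positivity)
  have hhalf : √(π / 2) = √(2 * π) / 2 := by
    rw [show 2 * π = 2 ^ 2 * (π / 2) by ring, sqrt_mul (by norm_num), sqrt_sq zero_le_two]
    ring
  rw [hmoment, phiMoment_eq, harctan, hrational, hhalf]
  field_simp
  linear_combination (-2) * hk
end

section
/- If (X,Y) is bivariate normal with standard normal marginals and correlation ρ ∈ (-1,1), then E[Y⁻·1_{X≥0} + Y⁺·1_{X<0}] = (1−ρ)/√(2π). -/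
open MeasureTheory Real Filter Set

open ProbabilityTheory
open scoped NNReal

lemma aux_odd (b : ℝ) : (∫ t : ℝ, t * rexp (-t ^ 2 / b)) = 0 := by
  have h : (∫ t : ℝ, (fun t : ℝ => t * rexp (-t ^ 2 / b)) (-t))
      = ∫ t : ℝ, t * rexp (-t ^ 2 / b) :=
    integral_neg_eq_self (fun t : ℝ => t * rexp (-t ^ 2 / b)) volume
  simp only [neg_sq, neg_mul] at h
  rw [integral_neg] at h
  linarith

lemma aux_Ioi {b : ℝ} (hb : 0 < b) :
    ∫ x in Set.Ioi (0:ℝ), x * rexp (-b * x ^ 2) = (2 * b)⁻¹ := by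
  have h := integral_mul_cexp_neg_mul_sq (b := (b:ℂ)) (by simpa using hb)
  have h3 := integral_ofReal (𝕜 := ℂ) (f := fun x : ℝ => x * rexp (-b * x ^ 2))
    (μ := volume.restrict (Set.Ioi 0))
  have h2 : (∫ x in Set.Ioi (0:ℝ), ((x * rexp (-b * x ^ 2) : ℝ) : ℂ))
      = ∫ r in Set.Ioi (0:ℝ), (r:ℂ) * Complex.exp (-(b:ℂ) * (r:ℂ) ^ 2) := by
    apply integral_congr_ae
    filter_upwards with x
    push_cast [Complex.ofReal_exp]
    ring_nf
  rw [h] at h2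
  have h4 := h3.symm.trans h2
  apply Complex.ofReal_inj.mp
  exact h4.trans (by push_cast; ring)

lemma integrable_abs_exp : Integrable (fun y : ℝ => |y| * rexp (-y ^ 2 / 2)) := by
  have h := (integrable_mul_exp_neg_mul_sq (b := (1:ℝ)/2) (by norm_num)).abs
  refine h.congr (Filter.Eventually.of_forall fun y => ?_)
  show |y * rexp (-(1/2) * y ^ 2)| = |y| * rexp (-y ^ 2 / 2)
  rw [abs_mul, abs_of_pos (Real.exp_pos _)]
  congr 2
  ring

lemma aux_abs_exp : (∫ y : ℝ, |y| * rexp (-y ^ 2 / 2)) = 2 := by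
  have hI : ∫ y in Set.Ioi (0:ℝ), |y| * rexp (-y ^ 2 / 2) = 1 := by
    rw [setIntegral_congr_fun measurableSet_Ioi
      (g := fun y : ℝ => y * rexp (-(1/2) * y ^ 2)) (fun y hy => by
        rw [abs_of_pos hy]; congr 1; ring_nf)]
    rw [aux_Ioi (by norm_num : (0:ℝ) < 1/2)]
    norm_num
  have hL : ∫ y in Set.Iic (0:ℝ), |y| * rexp (-y ^ 2 / 2) = 1 := by
    have := integral_comp_neg_Ioi (0:ℝ) (fun y : ℝ => |y| * rexp (-y ^ 2 / 2))
    rw [neg_zero] at this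
    rw [← this]
    simp only [abs_neg, neg_sq]
    exact hI
  rw [← intervalIntegral.integral_Iic_add_Ioi (b := (0:ℝ))
    integrable_abs_exp.integrableOn integrable_abs_exp.integrableOn, hI, hL]
  norm_num

lemma integrable_abs_std : Integrable (fun y : ℝ => |y| * stdPdf y) := by
  have h := integrable_abs_exp.const_mul (1 / Real.sqrt (2 * Real.pi))
  refine h.congr (Filter.Eventually.of_forall fun y => ?_)
  show 1 / Real.sqrt (2 * Real.pi) * (|y| * rexp (-y ^ 2 / 2)) = |y| * stdPdf y
  rw [stdPdf]; ring

lemma aux_abs_std : (∫ y : ℝ, |y| * stdPdf y) = 2 / Real.sqrt (2 * Real.pi) := by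
  unfold stdPdf
  have : (fun y : ℝ => |y| * (1 / Real.sqrt (2 * Real.pi) * rexp (-y ^ 2 / 2)))
      = fun y : ℝ => (1 / Real.sqrt (2 * Real.pi)) * (|y| * rexp (-y ^ 2 / 2)) := by
    ext y; ring
  rw [this, integral_const_mul, aux_abs_exp]
  ring

lemma integrable_id_gauss {v : ℝ≥0} (hv : 0 < (v:ℝ)) :
    Integrable (fun t : ℝ => t * gaussianPDFReal 0 v t) := by
  have h := (integrable_mul_exp_neg_mul_sq (b := (2*(v:ℝ))⁻¹)
    (by positivity)).const_mul (Real.sqrt (2 * Real.pi * v))⁻¹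
  refine h.congr (Filter.Eventually.of_forall fun t => ?_)
  show (Real.sqrt (2 * Real.pi * v))⁻¹ * (t * rexp (-(2*(v:ℝ))⁻¹ * t ^ 2))
      = t * gaussianPDFReal 0 v t
  rw [gaussianPDFReal, sub_zero,
    show -t ^ 2 / (2 * (v:ℝ)) = -(2*(v:ℝ))⁻¹ * t ^ 2 from by ring]
  ring

lemma aux_mean (m : ℝ) {v : ℝ≥0} (hv : 0 < (v:ℝ)) :
    (∫ y : ℝ, y * gaussianPDFReal m v y) = m := by
  have hv' : v ≠ 0 := by
    intro h; rw [h] at hv; simp at hv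
  rw [← integral_add_right_eq_self (μ := volume)
    (fun y : ℝ => y * gaussianPDFReal m v y) m]
  have key : ∀ t : ℝ, (t + m) * gaussianPDFReal m v (t + m)
      = t * gaussianPDFReal 0 v t + m * gaussianPDFReal 0 v t := by
    intro t
    rw [gaussianPDFReal, gaussianPDFReal, add_sub_cancel_right, sub_zero]
    ring
  simp_rw [key]
  rw [integral_add (integrable_id_gauss hv) ((integrable_gaussianPDFReal 0 v).const_mul m)]
  have h1 : (∫ t : ℝ, t * gaussianPDFReal 0 v t) = 0 := by
    have : (fun t : ℝ => t * gaussianPDFReal 0 v t)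
        = fun t : ℝ => (Real.sqrt (2 * Real.pi * v))⁻¹ * (t * rexp (-t ^ 2 / (2 * (v:ℝ)))) := by
      ext t; rw [gaussianPDFReal, sub_zero]; ring
    rw [this, integral_const_mul, aux_odd, mul_zero]
  rw [h1, integral_const_mul, integral_gaussianPDFReal_eq_one 0 hv', mul_one, zero_add]

lemma phi2_nonneg (ρ x y : ℝ) : 0 ≤ phi2 ρ x y := by
  rw [phi2]
  positivity

lemma phi2_symm (ρ x y : ℝ) : phi2 ρ x y = phi2 ρ y x := by
  rw [phi2, phi2]
  ring_nf

lemma phi2_cont (ρ : ℝ) : Continuous (fun p : ℝ × ℝ => phi2 ρ p.1 p.2) := by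
  unfold phi2
  fun_prop

lemma phi2_eq (ρ : ℝ) (hσ : 0 < 1 - ρ ^ 2) (x y : ℝ) :
    phi2 ρ x y = stdPdf x * gaussianPDFReal (ρ * x) (1 - ρ ^ 2).toNNReal y := by
  have hc : ((1 - ρ ^ 2).toNNReal : ℝ) = 1 - ρ ^ 2 := Real.coe_toNNReal _ hσ.le
  have h2π : (0:ℝ) < 2 * Real.pi := by positivity
  rw [phi2, stdPdf, gaussianPDFReal, hc]
  rw [mul_mul_mul_comm, ← Real.exp_add]
  congr 1
  · rw [Real.sqrt_mul h2π.le]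
    have hs : Real.sqrt (2 * Real.pi) * Real.sqrt (2 * Real.pi) = 2 * Real.pi :=
      Real.mul_self_sqrt h2π.le
    rw [one_div, one_div, ← mul_inv, ← mul_assoc, hs]
  · have hσ' : (1 - ρ ^ 2) ≠ 0 := ne_of_gt hσ
    field_simp
    ring

lemma gauss_v_ne (ρ : ℝ) (hσ : 0 < 1 - ρ ^ 2) : (1 - ρ ^ 2).toNNReal ≠ 0 := by
  simp [Real.toNNReal_pos.mpr hσ, ne_of_gt]

lemma sg_measurable : Measurable sg := by
  unfold sg
  exact Measurable.ite measurableSet_Ici measurable_const measurable_const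

lemma integrable_F1 (ρ : ℝ) (hσ : 0 < 1 - ρ ^ 2) :
    Integrable (fun p : ℝ × ℝ => |p.2| * phi2 ρ p.1 p.2) := by
  have hv : (0:ℝ) < ((1 - ρ ^ 2).toNNReal : ℝ) := by
    rw [Real.coe_toNNReal _ hσ.le]; exact hσ
  have hmeas : AEStronglyMeasurable (fun p : ℝ × ℝ => |p.2| * phi2 ρ p.1 p.2)
      (volume : Measure (ℝ × ℝ)) :=
    ((continuous_abs.comp continuous_snd).mul (phi2_cont ρ)).aestronglyMeasurable
  rw [show (volume : Measure (ℝ × ℝ)) = Measure.prod volume volume from Measure.volume_eq_prod ℝ ℝ] at hmeas ⊢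
  rw [integrable_prod_iff' hmeas]
  constructor
  · refine Filter.Eventually.of_forall fun y => ?_
    have : (fun x : ℝ => |y| * phi2 ρ x y)
        = fun x : ℝ => (|y| * stdPdf y) * gaussianPDFReal (ρ * y) (1 - ρ ^ 2).toNNReal x := by
      ext x; rw [phi2_symm, phi2_eq ρ hσ]; ring
    rw [this]
    exact (integrable_gaussianPDFReal _ _).const_mul _
  · have : (fun y : ℝ => ∫ x : ℝ, ‖|y| * phi2 ρ x y‖) = fun y : ℝ => |y| * stdPdf y := by
      ext y
      have hnorm : ∀ x : ℝ, ‖|y| * phi2 ρ x y‖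
          = (|y| * stdPdf y) * gaussianPDFReal (ρ * y) (1 - ρ ^ 2).toNNReal x := by
        intro x
        rw [Real.norm_eq_abs, abs_of_nonneg (mul_nonneg (abs_nonneg y) (phi2_nonneg ρ x y)),
          phi2_symm, phi2_eq ρ hσ]
        ring
      simp_rw [hnorm]
      rw [integral_const_mul, integral_gaussianPDFReal_eq_one _ (gauss_v_ne ρ hσ), mul_one]
    rw [this]
    exact integrable_abs_std

lemma integrable_F2 (ρ : ℝ) (hσ : 0 < 1 - ρ ^ 2) :
    Integrable (fun p : ℝ × ℝ => sg p.1 * p.2 * phi2 ρ p.1 p.2) := by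
  have hmeas : AEStronglyMeasurable (fun p : ℝ × ℝ => sg p.1 * p.2 * phi2 ρ p.1 p.2)
      (volume : Measure (ℝ × ℝ)) := by
    refine Measurable.aestronglyMeasurable ?_
    exact (((sg_measurable.comp measurable_fst).mul measurable_snd).mul
      (phi2_cont ρ).measurable)
  refine Integrable.mono' (integrable_F1 ρ hσ) hmeas (Filter.Eventually.of_forall fun p => ?_)
  rw [Real.norm_eq_abs, abs_mul, abs_mul]
  have hsg : |sg p.1| = 1 := by
    rw [sg]; split_ifs <;> simp
  rw [hsg, one_mul, abs_of_nonneg (phi2_nonneg ρ p.1 p.2)]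

theorem stmt9 (ρ : ℝ) (h1 : -1 < ρ) (h2 : ρ < 1) :
    ∫ p : ℝ × ℝ,
        (max (-p.2) 0 * (if 0 ≤ p.1 then (1 : ℝ) else 0) +
          max p.2 0 * (if p.1 < 0 then (1 : ℝ) else 0)) * phi2 ρ p.1 p.2
      = (1 - ρ) / Real.sqrt (2 * Real.pi) := by
  have hσ : (0:ℝ) < 1 - ρ ^ 2 := by nlinarith
  have hv : (0:ℝ) < ((1 - ρ ^ 2).toNNReal : ℝ) := by
    rw [Real.coe_toNNReal _ hσ.le]; exact hσ
  -- pointwise identity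
  have key : (fun p : ℝ × ℝ =>
      (max (-p.2) 0 * (if 0 ≤ p.1 then (1 : ℝ) else 0) +
          max p.2 0 * (if p.1 < 0 then (1 : ℝ) else 0)) * phi2 ρ p.1 p.2)
      = fun p : ℝ × ℝ => 2⁻¹ * (|p.2| * phi2 ρ p.1 p.2)
          - 2⁻¹ * (sg p.1 * p.2 * phi2 ρ p.1 p.2) := by
    funext p
    obtain ⟨x, y⟩ := p
    simp only [sg]
    rcases le_or_gt 0 x with hx | hx
    · rw [if_pos hx, if_neg (not_lt.mpr hx), if_pos hx]
      rcases le_or_gt 0 y with hy | hy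
      · rw [max_eq_right (by linarith : -y ≤ 0), abs_of_nonneg hy]; ring
      · rw [max_eq_left (by linarith : (0:ℝ) ≤ -y), abs_of_neg hy]; ring
    · rw [if_neg (not_le.mpr hx), if_pos hx, if_neg (not_le.mpr hx)]
      rcases le_or_gt 0 y with hy | hy
      · rw [max_eq_left hy, abs_of_nonneg hy]; ring
      · rw [max_eq_right hy.le, abs_of_neg hy]; ring
  rw [key]
  rw [integral_sub ((integrable_F1 ρ hσ).const_mul _) ((integrable_F2 ρ hσ).const_mul _)]
  rw [integral_const_mul, integral_const_mul]
  -- compute A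
  have hA : (∫ p : ℝ × ℝ, |p.2| * phi2 ρ p.1 p.2) = 2 / Real.sqrt (2 * Real.pi) := by
    have hint := integrable_F1 ρ hσ
    rw [show (volume : Measure (ℝ × ℝ)) = Measure.prod volume volume from Measure.volume_eq_prod ℝ ℝ]
      at hint ⊢
    rw [integral_prod_symm _ hint]
    have hinner : ∀ y : ℝ, (∫ x : ℝ, |y| * phi2 ρ x y) = |y| * stdPdf y := by
      intro y
      have : (fun x : ℝ => |y| * phi2 ρ x y)
          = fun x : ℝ => (|y| * stdPdf y) * gaussianPDFReal (ρ * y) (1 - ρ ^ 2).toNNReal x := by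
        ext x; rw [phi2_symm, phi2_eq ρ hσ]; ring
      rw [this, integral_const_mul, integral_gaussianPDFReal_eq_one _ (gauss_v_ne ρ hσ), mul_one]
    simp_rw [hinner]
    exact aux_abs_std
  -- compute B
  have hB : (∫ p : ℝ × ℝ, sg p.1 * p.2 * phi2 ρ p.1 p.2)
      = ρ * (2 / Real.sqrt (2 * Real.pi)) := by
    have hint := integrable_F2 ρ hσ
    rw [show (volume : Measure (ℝ × ℝ)) = Measure.prod volume volume from Measure.volume_eq_prod ℝ ℝ]
      at hint ⊢
    rw [integral_prod _ hint]
    have hinner : ∀ x : ℝ, (∫ y : ℝ, sg x * y * phi2 ρ x y) = ρ * (|x| * stdPdf x) := by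
      intro x
      have : (fun y : ℝ => sg x * y * phi2 ρ x y)
          = fun y : ℝ => (sg x * stdPdf x) * (y * gaussianPDFReal (ρ * x) (1 - ρ ^ 2).toNNReal y)
          := by
        ext y; rw [phi2_eq ρ hσ]; ring
      rw [this, integral_const_mul, aux_mean (ρ * x) hv]
      have hsgx : sg x * x = |x| := by
        rw [sg]
        split_ifs with h
        · rw [one_mul, abs_of_nonneg h]
        · rw [abs_of_neg (not_le.mp h)]; ring
      calc sg x * stdPdf x * (ρ * x) = ρ * ((sg x * x) * stdPdf x) := by ring
        _ = ρ * (|x| * stdPdf x) := by rw [hsgx]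
    simp_rw [hinner]
    rw [integral_const_mul, aux_abs_std]
  rw [hA, hB]
  ring
end
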